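/- Let $X$ be a normed space, $U \subseteq X$ open, $f: U \to \mathbb{R}$ continuous, $u \in U$, and $v \in X$ with $\|v\| = 1$. Suppose there exists $\sigma > 0$ such that $\limsup_{w \to u, t \to 0^+} \frac{f(w + tv) - f(w)}{t} \le -\sigma$. Then the weak slope satisfies $|df|(u) \ge \sigma$, i.e., there exist $\delta > 0$ and a continuous map $\mathscr{H}: B_\delta(u) \times [0,\delta] \to U$ with $\|\mathscr{H}(w,t) - w\| \le t$ and $f(\mathscr{H}(w,t)) \le f(w) - \sigma' t$ for any $\sigma' < \sigma$. -/
import Mathlib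


open Real Metric

theorem stmt_10 (X : Type*) [NormedAddCommGroup X] [NormedSpace ℝ X]
    (U : Set X) (hU : IsOpen U) (f : X → ℝ) (hf : ContinuousOn f U)
    (u : X) (hu : u ∈ U) (v : X) (hv : ‖v‖ = 1) (σ : ℝ) (hσ : 0 < σ)
    (hlimsup : ∀ ε > 0, ∃ δ > 0, ∀ w, ‖w - u‖ < δ → ∀ t : ℝ, 0 < t → t < δ →
      (f (w + t • v) - f w) / t ≤ -σ + ε) :
    ∀ σ' : ℝ, 0 ≤ σ' → σ' < σ →
      ∃ δ > 0, Metric.ball u δ ⊆ U ∧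
        ∃ H : X × ℝ → X, ContinuousOn H (Metric.ball u δ ×ˢ Set.Icc (0 : ℝ) δ) ∧
          ∀ w ∈ Metric.ball u δ, ∀ t ∈ Set.Icc (0 : ℝ) δ,
            H (w, t) ∈ U ∧ ‖H (w, t) - w‖ ≤ t ∧ f (H (w, t)) ≤ f w - σ' * t := by
  intro σ' hσ'0 hσ'
  obtain ⟨δ₀, hδ₀, hkey⟩ := hlimsup (σ - σ') (by linarith)
  obtain ⟨r, hr, hrU⟩ := Metric.isOpen_iff.mp hU u hu
  refine ⟨min (δ₀ / 2) (r / 4), by positivity, ?_, fun p => p.1 + p.2 • v, ?_, ?_⟩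
  · intro x hx
    apply hrU
    simp only [Metric.mem_ball] at hx ⊢
    calc dist x u < min (δ₀ / 2) (r / 4) := hx
      _ ≤ r / 4 := min_le_right _ _
      _ < r := by linarith
  · exact Continuous.continuousOn (by continuity)
  · intro w hw t ht
    simp only [Metric.mem_ball, dist_eq_norm] at hw
    have hwu : ‖w - u‖ < δ₀ := lt_of_lt_of_le hw (le_trans (min_le_left _ _) (by linarith))
    have htδ : t ≤ min (δ₀ / 2) (r / 4) := ht.2
    refine ⟨?_, ?_, ?_⟩
    · apply hrU
      simp only [Metric.mem_ball, dist_eq_norm]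
      have : w + t • v - u = (w - u) + t • v := by abel
      rw [this]
      calc ‖(w - u) + t • v‖ ≤ ‖w - u‖ + ‖t • v‖ := norm_add_le _ _
        _ = ‖w - u‖ + |t| * 1 := by rw [norm_smul, hv, Real.norm_eq_abs]
        _ = ‖w - u‖ + t := by rw [abs_of_nonneg ht.1]; ring
        _ < r := by
            have h1 : ‖w - u‖ < r / 4 := lt_of_lt_of_le hw (min_le_right _ _)
            have h2 : t ≤ r / 4 := le_trans htδ (min_le_right _ _)
            linarith
    · have : w + t • v - w = t • v := by abel
      rw [this, norm_smul, hv, Real.norm_eq_abs, abs_of_nonneg ht.1, mul_one]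
    · rcases eq_or_lt_of_le ht.1 with h0 | h0
      · simp [← h0]
      · have htlt : t < δ₀ := lt_of_le_of_lt (le_trans htδ (min_le_left _ _)) (by linarith)
        have := hkey w hwu t h0 htlt
        have h2 : (f (w + t • v) - f w) / t ≤ -σ' := by linarith
        have := (div_le_iff₀ h0).mp h2
        linarith
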